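/- arXiv:1204.1743 — 8 statements merged into one kernel-verified Lean document; each statement's English description precedes it below -/
import Mathlib

section
/- Let p be any prime number and let a, b ∈ ℚ_p be nonzero p-adic numbers. If the depressed cubic equation x³ + ax = b has a solution x with |x|_p = 1 (that is, a solution in the p-adic units ℤ_p^*), then one of the following three conditions holds: (i) |a|_p < |b|_p = 1; (ii) |b|_p < |a|_p = 1; (iii) |a|_p = |b|_p ≥ 1. -/
/-! Since `‖x³‖ = 1` and `‖a x‖ = ‖a‖`, the three cases are the isosceles-triangle principle
of the ultrametric norm applied to `b = x³ + a x`. -/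

/-- `x0` is the first digit of the nonzero `p`-adic number `x`: the unique integer in
`{1, …, p-1}` congruent modulo `p` to the unit part `x* = x·|x|_p = x·p^{-v_p(x)}`. -/
def isFirstDigit (p : ℕ) [Fact p.Prime] (x : ℚ_[p]) (x0 : ℤ) : Prop :=
  1 ≤ x0 ∧ x0 ≤ (p : ℤ) - 1 ∧ ‖x * (p : ℚ_[p]) ^ (-x.valuation) - (x0 : ℚ_[p])‖ < 1

open IsUltrametricDist in
theorem norm_add_cases_of_norm_eq {E : Type*} [SeminormedAddCommGroup E] [IsUltrametricDist E]
    {u v : E} {r : ℝ} (hu : ‖u‖ = r) :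
    (‖v‖ < ‖u + v‖ ∧ ‖u + v‖ = r) ∨ (‖u + v‖ < ‖v‖ ∧ ‖v‖ = r) ∨
      (‖v‖ = ‖u + v‖ ∧ r ≤ ‖v‖) := by
  rcases lt_trichotomy ‖v‖ r with hlt | heq | hgt
  · have hsum : ‖u + v‖ = r := by
      rw [norm_add_eq_max_of_norm_ne_norm (hu ▸ hlt.ne'), hu, max_eq_left hlt.le]
    exact Or.inl ⟨hsum ▸ hlt, hsum⟩
  · have hle : ‖u + v‖ ≤ r := by simpa [hu, heq] using norm_add_le_max u v
    rcases hle.lt_or_eq with hsum | hsum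
    · exact Or.inr (Or.inl ⟨heq ▸ hsum, heq⟩)
    · exact Or.inr (Or.inr ⟨heq.trans hsum.symm, heq.ge⟩)
  · have hsum : ‖u + v‖ = ‖v‖ := by
      rw [norm_add_eq_max_of_norm_ne_norm (hu ▸ hgt.ne), hu, max_eq_right hgt.le]
    exact Or.inr (Or.inr ⟨hsum.symm, hgt.le⟩)

theorem cubic_unit_solution_necessary_general (p : ℕ) [Fact p.Prime]
    (a b : ℚ_[p])
    (x : ℚ_[p]) (hx : ‖x‖ = 1) (hsol : x ^ 3 + a * x = b) :
    (‖a‖ < ‖b‖ ∧ ‖b‖ = 1) ∨ (‖b‖ < ‖a‖ ∧ ‖a‖ = 1) ∨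
      (‖a‖ = ‖b‖ ∧ 1 ≤ ‖a‖) := by
  have hx3 : ‖x ^ 3‖ = 1 := by rw [norm_pow, hx, one_pow]
  have hax : ‖a * x‖ = ‖a‖ := by rw [norm_mul, hx, mul_one]
  simpa only [hsol, hax] using norm_add_cases_of_norm_eq (v := a * x) hx3

theorem cubic_unit_solution_necessary (p : ℕ) [Fact p.Prime]
    (a b : ℚ_[p]) (ha : a ≠ 0) (hb : b ≠ 0)
    (x : ℚ_[p]) (hx : ‖x‖ = 1) (hsol : x ^ 3 + a * x = b) :
    (‖a‖ < ‖b‖ ∧ ‖b‖ = 1) ∨ (‖b‖ < ‖a‖ ∧ ‖a‖ = 1) ∨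
      (‖a‖ = ‖b‖ ∧ 1 ≤ ‖a‖) :=
  cubic_unit_solution_necessary_general p a b x hx hsol
end

section
/- Let p > 3 be a prime and let a, b ∈ ℚ_p be nonzero with |a|_p < |b|_p = 1. Then the equation x³ + ax = b has a solution x ∈ ℤ_p^* if and only if b_0^{(p−1)/gcd(3,p−1)} ≡ 1 (mod p), where b_0 is the first digit of b. -/
/-! Since `‖a‖ < 1`, the equation reduces modulo `p` to `x³ = b₀`. As `p ≠ 3`, any solution
of this in `𝔽_p^×` is a simple root, so Hensel's lemma lifts it to a root in `ℤ_p`, which is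
automatically a unit; conversely a unit root reduces to a cube root of `b₀`. In the cyclic
group `𝔽_p^×` of order `p - 1`, the cubes form the kernel of `u ↦ u ^ ((p - 1) / gcd(3, p - 1))`.
-/

universe u

open IsLocalRing Polynomial

theorem IsCyclic.range_powMonoidHom_eq_ker {G : Type*} [CommGroup G] [IsCyclic G] [Finite G]
    (d : ℕ) :
    (powMonoidHom d : G →* G).range =
      (powMonoidHom (Nat.card G / (Nat.card G).gcd d)).ker := by
  set m := Nat.card G
  have hle : (powMonoidHom d : G →* G).range ≤ (powMonoidHom (m / m.gcd d)).ker := by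
    rintro _ ⟨y, rfl⟩
    have hdvd : m ∣ d * (m / m.gcd d) := by
      rw [← Nat.mul_div_assoc _ (Nat.gcd_dvd_left m d), mul_comm,
        Nat.mul_div_assoc _ (Nat.gcd_dvd_right m d)]
      exact dvd_mul_right m _
    simp only [MonoidHom.mem_ker, powMonoidHom_apply, ← pow_mul]
    exact orderOf_dvd_iff_pow_eq_one.mp ((orderOf_dvd_natCard y).trans hdvd)
  refine Subgroup.eq_of_le_of_card_ge hle ?_
  rw [IsCyclic.card_powMonoidHom_ker, IsCyclic.card_powMonoidHom_range,
    Nat.gcd_eq_right (Nat.div_dvd_of_dvd (Nat.gcd_dvd_left m d))]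

theorem FiniteField.exists_pow_eq_iff_pow_eq_one {K : Type*} [Field K] [Finite K] {u : K}
    (hu : u ≠ 0) (d : ℕ) :
    (∃ c : K, c ^ d = u) ↔ u ^ ((Nat.card K - 1) / Nat.gcd d (Nat.card K - 1)) = 1 := by
  have key := SetLike.ext_iff.mp (IsCyclic.range_powMonoidHom_eq_ker (G := Kˣ) d) (Units.mk0 u hu)
  simp only [MonoidHom.mem_range, MonoidHom.mem_ker, powMonoidHom_apply, Units.ext_iff,
    Units.val_pow_eq_pow_val, Units.val_mk0, Units.val_one, Nat.card_units, Nat.gcd_comm] at key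
  rw [← key]
  constructor
  · rintro ⟨c, hc⟩
    rcases eq_or_ne c 0 with rfl | hc0
    -- `0 ^ 0 = 1`: the root `c = 0` occurs only for `d = 0` and `u = 1`.
    · obtain rfl : d = 0 := by_contra fun hd ↦ hu (by rw [← hc, zero_pow hd])
      exact ⟨1, by rw [pow_zero, ← hc, pow_zero]⟩
    · exact ⟨Units.mk0 c hc0, hc⟩
  · exact fun ⟨c, hc⟩ ↦ ⟨c, hc⟩

theorem HenselianLocalRing.of_henselianRing (R : Type*) [CommRing R] [IsLocalRing R]
    [HenselianRing R (maximalIdeal R)] : HenselianLocalRing R where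
  is_henselian f hf a₀ h₁ h₂ := HenselianRing.is_henselian f hf a₀ h₁ (h₂.map _)

instance PadicInt.henselianLocalRing (p : ℕ) [Fact p.Prime] : HenselianLocalRing ℤ_[p] :=
  .of_henselianRing ℤ_[p]

theorem HenselianLocalRing.exists_isUnit_pow_add_mul_eq_iff {R K : Type u} [CommRing R]
    [HenselianLocalRing R] [Field K] (φ : R →+* K) (hφ : Function.Surjective φ) {n : ℕ}
    (hn : 1 < n) (hnK : (n : K) ≠ 0) {A B : R} (hA : φ A = 0) (hB : IsUnit B) :
    (∃ x : R, IsUnit x ∧ x ^ n + A * x = B) ↔ ∃ c : K, c ^ n = φ B := by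
  constructor
  · rintro ⟨x, -, hx⟩
    exact ⟨φ x, by rw [← hx, map_add, map_mul, map_pow, hA, zero_mul, add_zero]⟩
  rintro ⟨c, hc⟩
  have hc0 : c ≠ 0 := by
    rintro rfl
    exact (hB.map φ).ne_zero (by rw [← hc, zero_pow (by omega)])
  set f : R[X] := X ^ n + C A * X - C B
  have hf : f.Monic := by
    unfold f
    monicity!
    simp [hn.le, hn.not_ge]
  have hensel := ((HenselianLocalRing.TFAE R).out 0 2).mp ‹_›
  obtain ⟨x, hxf, -⟩ := hensel φ hφ f hf c
    (by simp [f, eval₂_sub, hA, hc]) (by simp [f, derivative_X_pow, hA, hc0, hnK])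
  have hx : x ^ n + A * x = B := by simpa [f, sub_eq_zero] using hxf
  refine ⟨x, ?_, hx⟩
  obtain ⟨k, rfl⟩ : ∃ k, n = k + 1 := ⟨n - 1, by omega⟩
  refine isUnit_of_mul_isUnit_left (y := x ^ k + A) ?_
  rwa [mul_add, ← pow_succ', mul_comm x A, hx]

theorem PadicInt.exists_norm_eq_one_iff {p : ℕ} [Fact p.Prime] {P : ℚ_[p] → Prop} :
    (∃ x : ℚ_[p], ‖x‖ = 1 ∧ P x) ↔ ∃ x : ℤ_[p], IsUnit x ∧ P x :=
  ⟨fun ⟨x, hx, hP⟩ ↦ ⟨⟨x, hx.le⟩, isUnit_iff.mpr hx, hP⟩,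
    fun ⟨x, hx, hP⟩ ↦ ⟨x, isUnit_iff.mp hx, hP⟩⟩

theorem PadicInt.toZMod_eq_zero_iff {p : ℕ} [Fact p.Prime] {x : ℤ_[p]} :
    toZMod x = 0 ↔ ‖x‖ < 1 := by
  rw [← RingHom.mem_ker, ker_toZMod, mem_maximalIdeal, mem_nonunits]

theorem Padic.valuation_eq_zero_of_norm_eq_one {p : ℕ} [Fact p.Prime] {x : ℚ_[p]}
    (hx : ‖x‖ = 1) : x.valuation = 0 := by
  have hx0 : x ≠ 0 := norm_ne_zero_iff.mp (by rw [hx]; exact one_ne_zero)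
  have hp : (p : ℝ) ≠ 1 := mod_cast (Fact.out : p.Prime).one_lt.ne'
  have h := norm_eq_zpow_neg_valuation hx0
  rw [hx, eq_comm, zpow_eq_one_iff_right₀ (by positivity) hp, neg_eq_zero] at h
  exact h

theorem PadicInt.toZMod_eq_of_isFirstDigit {p : ℕ} [Fact p.Prime] {b : ℚ_[p]} (hb : ‖b‖ = 1)
    {b0 : ℤ} (h : isFirstDigit p b b0) : toZMod (⟨b, hb.le⟩ : ℤ_[p]) = b0 := by
  have hlt := h.2.2
  rw [Padic.valuation_eq_zero_of_norm_eq_one hb, neg_zero, zpow_zero, mul_one] at hlt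
  set B : ℤ_[p] := ⟨b, hb.le⟩
  rw [← sub_eq_zero, ← map_intCast toZMod, ← map_sub, toZMod_eq_zero_iff]
  exact hlt

theorem cubic_unit_solvable_iff_of_lt_general (p : ℕ) [Fact p.Prime] (hp : 3 < p)
    (a b : ℚ_[p])
    (hab : ‖a‖ < ‖b‖) (hb1 : ‖b‖ = 1)
    (b0 : ℤ) (hb0 : isFirstDigit p b b0) :
    (∃ x : ℚ_[p], ‖x‖ = 1 ∧ x ^ 3 + a * x = b) ↔
      Int.ModEq (p : ℤ) (b0 ^ ((p - 1) / Nat.gcd 3 (p - 1))) 1 := by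
  have ha1 : ‖a‖ < 1 := hb1 ▸ hab
  set A : ℤ_[p] := ⟨a, ha1.le⟩
  set B : ℤ_[p] := ⟨b, hb1.le⟩
  have hA : PadicInt.toZMod A = 0 := PadicInt.toZMod_eq_zero_iff.mpr ha1
  have hB : IsUnit B := PadicInt.isUnit_iff.mpr hb1
  have hB0 : PadicInt.toZMod B = b0 := PadicInt.toZMod_eq_of_isFirstDigit hb1 hb0
  have h3 : ((3 : ℕ) : ZMod p) ≠ 0 := by
    rw [Ne, ZMod.natCast_eq_zero_iff]
    exact fun h ↦ absurd (Nat.le_of_dvd (by norm_num) h) (by omega)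
  calc _ ↔ ∃ x : ℤ_[p], IsUnit x ∧ x ^ 3 + A * x = B := by
        rw [PadicInt.exists_norm_eq_one_iff]
        refine exists_congr fun x ↦ and_congr_right fun _ ↦ ?_
        exact ⟨fun h ↦ PadicInt.ext (by push_cast; exact h),
          fun h ↦ by simpa using congrArg ((↑) : ℤ_[p] → ℚ_[p]) h⟩
    _ ↔ ∃ c : ZMod p, c ^ 3 = b0 := by
        rw [← hB0]
        exact HenselianLocalRing.exists_isUnit_pow_add_mul_eq_iff _ (ZMod.ringHom_surjective _)
          (by norm_num) h3 hA hB
    _ ↔ (b0 : ZMod p) ^ ((p - 1) / Nat.gcd 3 (p - 1)) = 1 := by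
        rw [FiniteField.exists_pow_eq_iff_pow_eq_one (hB0 ▸ (hB.map _).ne_zero),
          Nat.card_zmod]
    _ ↔ _ := by
        rw [← ZMod.intCast_eq_intCast_iff, Int.cast_pow, Int.cast_one]

theorem cubic_unit_solvable_iff_of_lt (p : ℕ) [Fact p.Prime] (hp : 3 < p)
    (a b : ℚ_[p]) (ha : a ≠ 0) (hb : b ≠ 0)
    (hab : ‖a‖ < ‖b‖) (hb1 : ‖b‖ = 1)
    (b0 : ℤ) (hb0 : isFirstDigit p b b0) :
    (∃ x : ℚ_[p], ‖x‖ = 1 ∧ x ^ 3 + a * x = b) ↔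
      Int.ModEq (p : ℤ) (b0 ^ ((p - 1) / Nat.gcd 3 (p - 1))) 1 :=
  cubic_unit_solvable_iff_of_lt_general p hp a b hab hb1 b0 hb0
end

section
/- Let p > 3 be a prime and let a, b ∈ ℚ_p be nonzero with |a|_p = |b|_p = 1. Then the equation x³ + ax = b has a solution x ∈ ℤ_p^* if and only if D_0·u_{p−2}² ≢ 9·a_0² (mod p), where a_0, b_0 are the first digits of a and b, D_0 = −4a_0³ − 27b_0², and (u_n) is the integer sequence defined by u_1 = 0, u_2 = −a_0, u_3 = b_0, and u_{n+3} = b_0·u_n − a_0·u_{n+1}. -/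
/-- The sequence `u_1 = 0`, `u_2 = -a0`, `u_3 = b0`, `u_{n+3} = b0·u_n - a0·u_{n+1}`. -/
def useq (a0 b0 : ℤ) : ℕ → ℤ
  | 0 => 0
  | 1 => 0
  | 2 => -a0
  | 3 => b0
  | n + 4 => b0 * useq a0 b0 (n + 1) - a0 * useq a0 b0 (n + 2)

def cubicSeq {R : Type*} [CommRing R] (a b : R) : ℕ → R
  | 0 => 0
  | 1 => 0
  | 2 => -a
  | 3 => b
  | n + 4 => b * cubicSeq a b (n + 1) - a * cubicSeq a b (n + 2)

theorem map_cubicSeq {R S : Type*} [CommRing R] [CommRing S] (f : R →+* S) (a b : R) (n : ℕ) :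
    f (cubicSeq a b n) = cubicSeq (f a) (f b) n := by
  induction n using cubicSeq.induct <;> simp [cubicSeq, *]

theorem cast_useq {R : Type*} [CommRing R] (a0 b0 : ℤ) (n : ℕ) :
    (useq a0 b0 n : R) = cubicSeq (a0 : R) b0 n := by
  induction n using useq.induct <;> simp [useq, cubicSeq, *]

section Vieta

variable {R : Type*} [CommRing R] {a b α β γ : R}

theorem cubicSeq_succ_mul_vandermonde (hs : α + β + γ = 0) (ha : a = α * β + β * γ + γ * α)
    (hb : b = α * β * γ) (n : ℕ) :
    cubicSeq a b (n + 1) * ((α - β) * (α - γ) * (β - γ)) =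
      α ^ (n + 3) * (β - γ) - β ^ (n + 3) * (α - γ) + γ ^ (n + 3) * (α - β) := by
  obtain rfl : γ = -α - β := by linear_combination hs
  subst ha hb
  induction n using Nat.strong_induction_on with
  | _ n ih =>
    match n, ih with
    | 0, _ => simp only [cubicSeq]; ring
    | 1, _ => simp only [cubicSeq]; ring
    | 2, _ => simp only [cubicSeq]; ring
    | n + 3, ih =>
      rw [cubicSeq]
      linear_combination (α * β * (-α - β)) * ih n (by omega) -
        (α * β + β * (-α - β) + (-α - β) * α) * ih (n + 1) (by omega)

theorem discr_eq_vandermonde_sq (hs : α + β + γ = 0) (ha : a = α * β + β * γ + γ * α)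
    (hb : b = α * β * γ) : -4 * a ^ 3 - 27 * b ^ 2 = ((α - β) * (α - γ) * (β - γ)) ^ 2 := by
  obtain rfl : γ = -α - β := by linear_combination hs
  subst ha hb
  ring

theorem discr_mul_cubicSeq_sq (hs : α + β + γ = 0) (ha : a = α * β + β * γ + γ * α)
    (hb : b = α * β * γ) (n : ℕ) :
    (-4 * a ^ 3 - 27 * b ^ 2) * cubicSeq a b (n + 1) ^ 2 =
      (α ^ (n + 3) * (β - γ) - β ^ (n + 3) * (α - γ) + γ ^ (n + 3) * (α - β)) ^ 2 := by
  rw [discr_eq_vandermonde_sq hs ha hb, ← cubicSeq_succ_mul_vandermonde hs ha hb]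
  ring

theorem cubic_eq_mul (hs : α + β + γ = 0) (ha : a = α * β + β * γ + γ * α)
    (hb : b = α * β * γ) (x : R) : x ^ 3 + a * x - b = (x - α) * (x - β) * (x - γ) := by
  obtain rfl : γ = -α - β := by linear_combination hs
  subst ha hb
  ring

theorem eq_or_eq_or_eq_of_cubic [IsDomain R] (hs : α + β + γ = 0)
    (ha : a = α * β + β * γ + γ * α) (hb : b = α * β * γ) {x : R} (hx : x ^ 3 + a * x = b) :
    x = α ∨ x = β ∨ x = γ := by
  have h := cubic_eq_mul hs ha hb x
  rw [hx, sub_self, eq_comm] at h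
  simpa [sub_eq_zero, or_assoc] using h

theorem vieta_of_quadratic (hα : α ^ 3 + a * α = b) (hβ : β ^ 2 + α * β + α ^ 2 + a = 0) :
    a = α * β + β * (-α - β) + (-α - β) * α ∧ b = α * β * (-α - β) := by
  constructor
  · linear_combination hβ
  · linear_combination -hα + α * hβ

end Vieta

theorem IsAlgClosed.exists_cubic_root {K : Type*} [Field K] [IsAlgClosed K] (a b : K) :
    ∃ x : K, x ^ 3 + a * x = b := by
  obtain ⟨x, hx⟩ := IsAlgClosed.exists_root
    (Polynomial.X ^ 3 + Polynomial.C a * Polynomial.X - Polynomial.C b)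
    (ne_of_eq_of_ne (by compute_degree!) (by decide : (3 : WithBot ℕ) ≠ 0))
  exact ⟨x, by simpa [sub_eq_zero] using hx⟩

theorem eq_zero_of_sq_eq_sq_of_map_eq_neg {K : Type*} [Field K] [NeZero (2 : K)] (φ : K →+* K)
    {s t : K} (hs : φ s = s) (hts : t ^ 2 = s ^ 2) (ht : φ t = -t) : t = 0 := by
  have hfix : φ t = t := by
    rcases sq_eq_sq_iff_eq_or_eq_neg.mp hts with rfl | rfl
    · exact hs
    · rw [map_neg, hs]
  have h2t : 2 * t = 0 := by linear_combination ht - hfix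
  exact (mul_eq_zero.mp h2t).resolve_left two_ne_zero

section FrobeniusTwist

variable {K : Type*} [Field K] (φ : K →+* K) {A B α β γ : K}

def twistedAlternant (α β γ : K) : K :=
  φ α * (β - γ) - φ β * (α - γ) + φ γ * (α - β)

theorem map_cubic_root (hA : φ A = A) (hB : φ B = B) {x : K} (hx : x ^ 3 + A * x = B) :
    φ x ^ 3 + A * φ x = B := by
  rw [← hA, ← hB, ← hx]
  simp

theorem map_root_eq_or_eq_or_eq (hφA : φ A = A) (hφB : φ B = B)
    (hs : α + β + γ = 0) (hA : A = α * β + β * γ + γ * α) (hB : B = α * β * γ) {x : K}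
    (hx : x ^ 3 + A * x = B) : φ x = α ∨ φ x = β ∨ φ x = γ :=
  eq_or_eq_or_eq_of_cubic hs hA hB (map_cubic_root φ hφA hφB hx)

theorem twistedAlternant_eq_zero_of_map_eq_self [NeZero (2 : K)] (hφA : φ A = A)
    (hφB : φ B = B) (hs : α + β + γ = 0) (hA : A = α * β + β * γ + γ * α) (hB : B = α * β * γ)
    (hα : φ α = α) (h : twistedAlternant φ α β γ ^ 2 = (3 * A) ^ 2) :
    twistedAlternant φ α β γ = 0 := by
  have hβ := map_root_eq_or_eq_or_eq φ hφA hφB hs hA hB (x := β)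
    (sub_eq_zero.mp (by rw [cubic_eq_mul hs hA hB]; ring))
  have hγ : φ γ = -φ α - φ β := by rw [← map_neg, ← map_sub]; congr 1; linear_combination hs
  obtain rfl : γ = -α - β := by linear_combination hs
  rcases hβ with hβ | hβ | hβ
  · obtain rfl : β = α := φ.injective (hβ.trans hα.symm)
    simp only [twistedAlternant, hγ, hα]; ring
  · simp only [twistedAlternant, hγ, hα, hβ]; ring
  · have hW : twistedAlternant φ α β (-α - β) = 3 * (α * (α + 2 * β)) := by
      simp only [twistedAlternant, hγ, hα, hβ]; ring
    refine eq_zero_of_sq_eq_sq_of_map_eq_neg φ (by rw [map_mul, map_ofNat, hφA]) h ?_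
    rw [hW, map_mul, map_mul, map_add, map_mul, hα, hβ, map_ofNat, map_ofNat]
    ring

theorem twistedAlternant_sq_of_forall_map_ne (hφA : φ A = A) (hφB : φ B = B)
    (hs : α + β + γ = 0) (hA : A = α * β + β * γ + γ * α) (hB : B = α * β * γ)
    (hfix : ∀ x, x ^ 3 + A * x = B → φ x ≠ x) (hα : φ α = β) :
    twistedAlternant φ α β γ ^ 2 = (3 * A) ^ 2 := by
  have hroot : ∀ x, x = α ∨ x = β ∨ x = γ → x ^ 3 + A * x = B := by
    intro x hx
    refine sub_eq_zero.mp ?_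
    rw [cubic_eq_mul hs hA hB]
    rcases hx with rfl | rfl | rfl <;> ring
  have hβ := map_root_eq_or_eq_or_eq φ hφA hφB hs hA hB (hroot β (by simp))
  have hγ : φ γ = -φ α - φ β := by rw [← map_neg, ← map_sub]; congr 1; linear_combination hs
  rcases hβ with hβ | hβ | hβ
  · refine absurd ?_ (hfix γ (hroot γ (by simp)))
    rw [hγ, hα, hβ]
    linear_combination -hs
  · exact absurd hβ (hfix β (hroot β (by simp)))
  · obtain rfl : γ = -α - β := by linear_combination hs
    rw [twistedAlternant, hγ, hα, hβ, hA]
    ring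

end FrobeniusTwist

namespace FiniteField

variable {F : Type*} [Field F] [Fintype F]

theorem exists_algebraMap_eq_of_pow_card_eq {L : Type*} [Field L] [Algebra F L] {x : L}
    (hx : x ^ Fintype.card F = x) : ∃ r : F, algebraMap F L r = x := by
  have hq := Fintype.one_lt_card (α := F)
  have hroots := Polynomial.roots_map_of_injective_of_card_eq_natDegree
    (algebraMap F L).injective (p := Polynomial.X ^ Fintype.card F - Polynomial.X) (by
      rw [roots_X_pow_card_sub_X, X_pow_card_sub_X_natDegree_eq F hq]; rfl)
  have hmem : x ∈ (Polynomial.map (algebraMap F L)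
      (Polynomial.X ^ Fintype.card F - Polynomial.X)).roots := by
    rw [Polynomial.mem_roots', Polynomial.map_sub, Polynomial.map_pow, Polynomial.map_X]
    exact ⟨X_pow_card_sub_X_ne_zero L hq, by simp [hx]⟩
  rw [← hroots, roots_X_pow_card_sub_X] at hmem
  simpa using hmem

theorem two_lt_card_of_two_ne_zero (h2 : (2 : F) ≠ 0) : 2 < Fintype.card F :=
  Nat.lt_of_le_of_ne Fintype.one_lt_card fun h => h2 (by simpa [← h] using cast_card_eq_zero F)

theorem algebraMap_discr_mul_cubicSeq_sq {L : Type*} [Field L] [Algebra F L]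
    (hq : 2 < Fintype.card F) {a b : F} {α β γ : L} (hs : α + β + γ = 0)
    (ha : algebraMap F L a = α * β + β * γ + γ * α) (hb : algebraMap F L b = α * β * γ) :
    algebraMap F L ((-4 * a ^ 3 - 27 * b ^ 2) * cubicSeq a b (Fintype.card F - 2) ^ 2) =
      twistedAlternant (frobeniusAlgHom F L : L →+* L) α β γ ^ 2 := by
  have h := discr_mul_cubicSeq_sq hs ha hb (Fintype.card F - 3)
  rw [show Fintype.card F - 3 + 1 = Fintype.card F - 2 by omega,
    show Fintype.card F - 3 + 3 = Fintype.card F by omega] at h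
  simp only [map_mul, map_sub, map_neg, map_pow, map_ofNat, map_cubicSeq, twistedAlternant]
  exact h

theorem discr_mul_cubicSeq_sq_ne_of_root (h2 : (2 : F) ≠ 0) (h3 : (3 : F) ≠ 0) {a b r : F}
    (ha : a ≠ 0) (hr : r ^ 3 + a * r = b) :
    (-4 * a ^ 3 - 27 * b ^ 2) * cubicSeq a b (Fintype.card F - 2) ^ 2 ≠ 9 * a ^ 2 := by
  intro h
  let K := AlgebraicClosure F
  let i := algebraMap F K
  let φ : K →+* K := frobeniusAlgHom F K
  have : NeZero (2 : K) := ⟨map_ofNat i 2 ▸ (map_ne_zero i).2 h2⟩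
  obtain ⟨β, hβ⟩ : ∃ β, 1 * (β * β) + i r * β + (i r ^ 2 + i a) = 0 :=
    exists_quadratic_eq_zero one_ne_zero (IsAlgClosed.exists_eq_mul_self _)
  obtain ⟨hA, hB⟩ := vieta_of_quadratic (α := i r) (β := β) (a := i a) (b := i b)
    (by rw [← hr]; simp [i]) (by linear_combination hβ)
  have hW := algebraMap_discr_mul_cubicSeq_sq (two_lt_card_of_two_ne_zero h2) (by ring) hA hB
  rw [h] at hW
  have hW0 := twistedAlternant_eq_zero_of_map_eq_self φ ((frobeniusAlgHom F K).commutes a)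
    ((frobeniusAlgHom F K).commutes b) (by ring) hA hB ((frobeniusAlgHom F K).commutes r)
    (by rw [← hW, map_mul, map_pow, map_ofNat]; ring)
  rw [hW0, zero_pow two_ne_zero, map_eq_zero, show (9 : F) = 3 ^ 2 by norm_num] at hW
  exact mul_ne_zero (pow_ne_zero 2 h3) (pow_ne_zero 2 ha) hW

theorem discr_mul_cubicSeq_sq_eq_of_forall_ne (hq : 2 < Fintype.card F) {a b : F}
    (h : ∀ r : F, r ^ 3 + a * r ≠ b) :
    (-4 * a ^ 3 - 27 * b ^ 2) * cubicSeq a b (Fintype.card F - 2) ^ 2 = 9 * a ^ 2 := by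
  let K := AlgebraicClosure F
  let i := algebraMap F K
  let φ : K →+* K := frobeniusAlgHom F K
  have hφa : φ (i a) = i a := (frobeniusAlgHom F K).commutes a
  have hφb : φ (i b) = i b := (frobeniusAlgHom F K).commutes b
  have hfix : ∀ x, x ^ 3 + i a * x = i b → φ x ≠ x := by
    intro x hx hφx
    obtain ⟨r, rfl⟩ := exists_algebraMap_eq_of_pow_card_eq hφx
    exact h r (i.injective (by simpa using hx))
  obtain ⟨α, hα⟩ := IsAlgClosed.exists_cubic_root (i a) (i b)
  have hquad : φ α ^ 2 + α * φ α + α ^ 2 + i a = 0 :=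
    mul_left_cancel₀ (sub_ne_zero.2 (hfix α hα))
      (by linear_combination map_cubic_root φ hφa hφb hα - hα)
  obtain ⟨hA, hB⟩ := vieta_of_quadratic hα hquad
  have hW := algebraMap_discr_mul_cubicSeq_sq hq (by ring) hA hB
  rw [twistedAlternant_sq_of_forall_map_ne φ hφa hφb (by ring) hA hB hfix rfl] at hW
  apply i.injective
  rw [hW, map_mul, map_pow, map_ofNat]
  ring

theorem exists_cubic_root_iff (h2 : (2 : F) ≠ 0) (h3 : (3 : F) ≠ 0) {a : F} (ha : a ≠ 0)
    (b : F) : (∃ r : F, r ^ 3 + a * r = b) ↔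
      (-4 * a ^ 3 - 27 * b ^ 2) * cubicSeq a b (Fintype.card F - 2) ^ 2 ≠ 9 * a ^ 2 := by
  refine ⟨fun ⟨r, hr⟩ => discr_mul_cubicSeq_sq_ne_of_root h2 h3 ha hr, fun h => ?_⟩
  by_contra! hno
  exact h (discr_mul_cubicSeq_sq_eq_of_forall_ne (two_lt_card_of_two_ne_zero h2) hno)

end FiniteField

theorem exists_simple_cubic_root {K : Type*} [Field K] (h3 : (3 : K) ≠ 0) {a b r : K}
    (hb : b ≠ 0) (hr : r ^ 3 + a * r = b) : ∃ s, s ^ 3 + a * s = b ∧ 3 * s ^ 2 + a ≠ 0 := by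
  by_cases hd : 3 * r ^ 2 + a = 0
  · have hr0 : r ≠ 0 := by rintro rfl; simp [← hr] at hb
    refine ⟨-2 * r, by linear_combination hr - 3 * r * hd, fun h => ?_⟩
    have : 3 ^ 2 * r ^ 2 = 0 := by linear_combination h - hd
    exact mul_ne_zero (pow_ne_zero 2 h3) (pow_ne_zero 2 hr0) this
  · exact ⟨r, hr, hd⟩

namespace PadicInt

open Polynomial

variable {p : ℕ} [Fact p.Prime]

theorem toZMod_eq_zero_iff_s3 {x : ℤ_[p]} : toZMod x = 0 ↔ ‖x‖ < 1 := by
  rw [← RingHom.mem_ker, ker_toZMod, IsLocalRing.mem_maximalIdeal, mem_nonunits]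

theorem exists_isRoot_toZMod_eq {f : ℤ_[p][X]} (hf : f.Monic) {r : ZMod p}
    (hr : f.eval₂ toZMod r = 0) (hr' : f.derivative.eval₂ toZMod r ≠ 0) :
    ∃ z : ℤ_[p], f.IsRoot z ∧ toZMod z = r := by
  have : HenselianLocalRing ℤ_[p] :=
    ⟨fun f hf a₀ h₁ h₂ => HenselianRing.is_henselian f hf a₀ h₁ (h₂.map _)⟩
  have H := ((HenselianLocalRing.TFAE ℤ_[p]).out 0 2).1 this
  exact H toZMod (ZMod.ringHom_surjective _) f hf r hr hr'

theorem exists_unit_cubic_root_iff (h3 : (3 : ZMod p) ≠ 0) {A B : ℤ_[p]} (hB : ‖B‖ = 1) :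
    (∃ x : ℚ_[p], ‖x‖ = 1 ∧ x ^ 3 + A * x = B) ↔
      ∃ r : ZMod p, r ^ 3 + toZMod A * r = toZMod B := by
  have hB0 : toZMod B ≠ 0 := by rw [Ne, toZMod_eq_zero_iff_s3, hB]; exact lt_irrefl 1
  constructor
  · rintro ⟨x, hx, hxA⟩
    obtain ⟨z, rfl⟩ : ∃ z : ℤ_[p], (z : ℚ_[p]) = x := ⟨⟨x, hx.le⟩, rfl⟩
    have hzA : z ^ 3 + A * z = B := PadicInt.ext (by push_cast; exact hxA)
    exact ⟨toZMod z, by rw [← hzA]; simp⟩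
  · rintro ⟨r, hr⟩
    obtain ⟨s, hs, hs'⟩ := exists_simple_cubic_root h3 hB0 hr
    obtain ⟨z, hz, hzs⟩ := exists_isRoot_toZMod_eq (f := X ^ 3 + C A * X - C B) (by monicity!)
      (r := s) (by simp [hs]) (by rw [eval₂_eq_eval_map, ← derivative_map]; norm_num [hs'])
    have hs0 : s ≠ 0 := by rintro rfl; simp [← hs] at hB0
    have hzB : z ^ 3 + A * z = B := by simpa [sub_eq_zero] using hz
    refine ⟨z, ?_, by exact_mod_cast congrArg ((↑) : ℤ_[p] → ℚ_[p]) hzB⟩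
    rw [← norm_def]
    exact le_antisymm (norm_le_one z) (not_lt.1 fun h => hs0 (hzs ▸ toZMod_eq_zero_iff_s3.2 h))

theorem toZMod_eq_of_isFirstDigit_s3 {x : ℤ_[p]} (hx : ‖x‖ = 1) {x0 : ℤ}
    (h : isFirstDigit p x x0) : toZMod x = x0 := by
  have hv : x.valuation = 0 := by
    have := norm_eq_zpow_neg_valuation (x := x) (by rintro rfl; simp at hx)
    rw [hx, eq_comm, zpow_eq_one_iff_right₀ (by positivity)
      (by exact_mod_cast (Fact.out : p.Prime).ne_one)] at this
    simpa using this
  have hx0 := h.2.2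
  rw [valuation_coe, hv, Nat.cast_zero, neg_zero, zpow_zero, mul_one] at hx0
  rw [← sub_eq_zero, ← map_intCast toZMod, ← map_sub, toZMod_eq_zero_iff_s3, norm_def]
  simpa using hx0

end PadicInt

theorem cubic_unit_solvable_iff_of_eq_one_general (p : ℕ) [Fact p.Prime] (hp : 3 < p)
    (a b : ℚ_[p])
    (ha1 : ‖a‖ = 1) (hb1 : ‖b‖ = 1)
    (a0 b0 : ℤ) (ha0 : isFirstDigit p a a0) (hb0 : isFirstDigit p b b0) :
    (∃ x : ℚ_[p], ‖x‖ = 1 ∧ x ^ 3 + a * x = b) ↔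
      ¬ Int.ModEq (p : ℤ)
        ((-4 * a0 ^ 3 - 27 * b0 ^ 2) * useq a0 b0 (p - 2) ^ 2) (9 * a0 ^ 2) := by
  obtain ⟨A, rfl⟩ : ∃ A : ℤ_[p], (A : ℚ_[p]) = a := ⟨⟨a, ha1.le⟩, rfl⟩
  obtain ⟨B, rfl⟩ : ∃ B : ℤ_[p], (B : ℚ_[p]) = b := ⟨⟨b, hb1.le⟩, rfl⟩
  rw [← PadicInt.norm_def] at ha1 hb1
  have hA := PadicInt.toZMod_eq_of_isFirstDigit_s3 ha1 ha0
  have hB := PadicInt.toZMod_eq_of_isFirstDigit_s3 hb1 hb0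
  have hne : ∀ n : ℕ, 0 < n → n < p → (n : ZMod p) ≠ 0 := fun n h0 hn => by
    rw [Ne, ZMod.natCast_eq_zero_iff]
    exact Nat.not_dvd_of_pos_of_lt h0 hn
  have h2 : (2 : ZMod p) ≠ 0 := by exact_mod_cast hne 2 (by omega) (by omega)
  have h3 : (3 : ZMod p) ≠ 0 := by exact_mod_cast hne 3 (by omega) (by omega)
  have ha : (a0 : ZMod p) ≠ 0 := by
    rw [← hA, Ne, PadicInt.toZMod_eq_zero_iff_s3, ha1]
    exact lt_irrefl 1
  rw [PadicInt.exists_unit_cubic_root_iff h3 hb1, hA, hB,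
    FiniteField.exists_cubic_root_iff h2 h3 ha, ZMod.card, Ne, ← ZMod.intCast_eq_intCast_iff]
  push_cast [cast_useq]
  rfl

theorem cubic_unit_solvable_iff_of_eq_one (p : ℕ) [Fact p.Prime] (hp : 3 < p)
    (a b : ℚ_[p]) (ha : a ≠ 0) (hb : b ≠ 0)
    (ha1 : ‖a‖ = 1) (hb1 : ‖b‖ = 1)
    (a0 b0 : ℤ) (ha0 : isFirstDigit p a a0) (hb0 : isFirstDigit p b b0) :
    (∃ x : ℚ_[p], ‖x‖ = 1 ∧ x ^ 3 + a * x = b) ↔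
      ¬ Int.ModEq (p : ℤ)
        ((-4 * a0 ^ 3 - 27 * b0 ^ 2) * useq a0 b0 (p - 2) ^ 2) (9 * a0 ^ 2) :=
  cubic_unit_solvable_iff_of_eq_one_general p hp a b ha1 hb1 a0 b0 ha0 hb0
end

section
/- Let p > 3 be a prime and let a, b ∈ ℚ_p be nonzero with |a|_p³ > |b|_p². Then the equation x³ + ax = b has a solution x ∈ ℤ_p if and only if |a|_p ≥ |b|_p. -/
open Polynomial

theorem norm_le_of_pow_three_add_mul_eq {K : Type*} [NormedField K] [IsUltrametricDist K]
    {a b x : K} (hab : ‖b‖ ^ 2 < ‖a‖ ^ 3) (hx : ‖x‖ ≤ 1) (h : x ^ 3 + a * x = b) :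
    ‖b‖ ≤ ‖a‖ := by
  by_contra! hab'
  have hb : ‖b‖ ≤ max (‖x‖ ^ 3) (‖a‖ * ‖x‖) := by
    rw [← h, ← norm_pow, ← norm_mul]
    exact IsUltrametricDist.norm_add_le_max _ _
  have hb1 : ‖b‖ ≤ 1 := by
    rcases le_max_iff.mp hb with hb | hb
    · exact hb.trans (pow_le_one₀ (norm_nonneg x) hx)
    · nlinarith [norm_nonneg a]
  have ha3 : ‖a‖ ^ 3 ≤ ‖a‖ ^ 2 := pow_le_pow_of_le_one (norm_nonneg a) (by linarith) (by norm_num)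
  have ha2 : ‖a‖ ^ 2 < ‖b‖ ^ 2 := pow_lt_pow_left₀ hab' (norm_nonneg a) two_ne_zero
  linarith

theorem PadicInt.exists_mul_pow_add_eq_one {p : ℕ} [Fact p.Prime] {t : ℤ_[p]} (ht : ‖t‖ < 1)
    (n : ℕ) : ∃ z : ℤ_[p], t * z ^ n + z = 1 := by
  set F : ℤ_[p][X] := C t * X ^ n + X - 1
  have hF : F.aeval 1 = t := by simp [F]
  have hF' : F.derivative.aeval 1 = t * n + 1 := by simp [F, derivative_X_pow]
  have hF'_norm : ‖t * n + 1‖ = 1 := by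
    have : ‖t * n‖ < ‖(1 : ℤ_[p])‖ := by
      rw [norm_one, norm_mul]
      exact (mul_le_of_le_one_right (norm_nonneg t) (PadicInt.norm_le_one _)).trans_lt ht
    rw [IsUltrametricDist.norm_add_eq_max_of_norm_ne_norm this.ne, max_eq_right this.le, norm_one]
  obtain ⟨z, hz, -⟩ := hensels_lemma (p := p) (F := F) (a := 1)
    (by rwa [hF, hF', hF'_norm, one_pow])
  exact ⟨z, by simpa [F, sub_eq_zero] using hz⟩

theorem Padic.exists_norm_le_one_mul_pow_add_eq_one {p : ℕ} [Fact p.Prime] {t : ℚ_[p]}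
    (ht : ‖t‖ < 1) (n : ℕ) : ∃ z : ℚ_[p], ‖z‖ ≤ 1 ∧ t * z ^ n + z = 1 := by
  obtain ⟨z, hz⟩ := PadicInt.exists_mul_pow_add_eq_one (t := ⟨t, ht.le⟩) ht n
  refine ⟨z, z.norm_le_one, ?_⟩
  have := congrArg ((↑) : ℤ_[p] → ℚ_[p]) hz
  push_cast at this
  exact this

theorem cubic_int_solvable_iff_of_gt_general (p : ℕ) [Fact p.Prime]
    (a b : ℚ_[p])
    (hab : ‖b‖ ^ 2 < ‖a‖ ^ 3) :
    (∃ x : ℚ_[p], ‖x‖ ≤ 1 ∧ x ^ 3 + a * x = b) ↔ ‖b‖ ≤ ‖a‖ := by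
  refine ⟨fun ⟨x, hx, h⟩ => norm_le_of_pow_three_add_mul_eq hab hx h, fun hba => ?_⟩
  have ha : a ≠ 0 := by
    rintro rfl
    rw [norm_zero, zero_pow three_ne_zero] at hab
    exact hab.not_ge (sq_nonneg _)
  have ht : ‖b ^ 2 / a ^ 3‖ < 1 := by
    rwa [norm_div, norm_pow, norm_pow, div_lt_one (by positivity)]
  obtain ⟨z, hz, hzt⟩ := Padic.exists_norm_le_one_mul_pow_add_eq_one ht 3
  refine ⟨b / a * z, ?_, ?_⟩
  · rw [norm_mul, norm_div]
    exact mul_le_one₀ ((div_le_one (norm_pos_iff.mpr ha)).mpr hba) (norm_nonneg z) hz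
  · field_simp at hzt ⊢
    linear_combination b * hzt

theorem cubic_int_solvable_iff_of_gt (p : ℕ) [Fact p.Prime] (hp : 3 < p)
    (a b : ℚ_[p]) (ha : a ≠ 0) (hb : b ≠ 0)
    (hab : ‖b‖ ^ 2 < ‖a‖ ^ 3) :
    (∃ x : ℚ_[p], ‖x‖ ≤ 1 ∧ x ^ 3 + a * x = b) ↔ ‖b‖ ≤ ‖a‖ :=
  cubic_int_solvable_iff_of_gt_general p a b hab
end

section
/- Let p > 3 be a prime and let a, b ∈ ℚ_p be nonzero with |a|_p³ = |b|_p². Then the equation x³ + ax = b has a solution x ∈ ℚ_p if and only if D_0·u_{p−2}² ≢ 9·a_0² (mod p), where a_0, b_0 are the first digits of a and b, D_0 = −4a_0³ − 27b_0², and (u_n) is the integer sequence defined by u_1 = 0, u_2 = −a_0, u_3 = b_0, and u_{n+3} = b_0·u_n − a_0·u_{n+1}. -/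
/-!
Substituting `x = p^k y` turns the equation into `y³ + A y = B` with `A, B ∈ ℤ_p^*` whose
residues are the first digits `a₀, b₀`. A root in `ℚ_p` is integral, and by Hensel's lemma one
exists iff `y³ + a₀ y = b₀` is solvable mod `p`: if a root mod `p` is a double root, the
discriminant `D₀ = -4a₀³ - 27b₀²` vanishes and `-3b₀/a₀` is a simple root.

If `D₀ ≢ 0`, let `θ₁, θ₂, θ₃` be the (distinct) roots in an algebraic closure of `𝔽_p`, and
`Δ = (θ₁ - θ₂)(θ₁ - θ₃)(θ₂ - θ₃)`, so `Δ² = D₀`. The recurrence gives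
`u_{n+1} Δ = Σ_cyc θ₁^{n+3} (θ₂ - θ₃)`, hence `D₀ u_{p-2}² = W²` with
`W = Σ_cyc φ(θ₁) (θ₂ - θ₃)` for the Frobenius `φ`. According as `φ` acts on the roots as the
identity, a transposition fixing `θ₁`, or a 3-cycle, `W` is `0`, `3θ₁(θ₂ - θ₃)` (whose square is
never `9a₀²`), or `±3a₀`; and `φ` is a 3-cycle exactly when no root lies in `𝔽_p`.
-/

/-- `θ₁, θ₂, θ₃` are the roots of `X³ + A X - B`, listed with multiplicity (Vieta). -/
structure IsCubicRoots {R : Type*} [CommRing R] (A B θ₁ θ₂ θ₃ : R) : Prop where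
  add_add : θ₁ + θ₂ + θ₃ = 0
  mul_add_mul_add_mul : θ₁ * θ₂ + θ₁ * θ₃ + θ₂ * θ₃ = A
  mul_mul : θ₁ * θ₂ * θ₃ = B

def alternant {R : Type*} [CommRing R] (f : R → R) (θ₁ θ₂ θ₃ : R) : R :=
  f θ₁ * (θ₂ - θ₃) + f θ₂ * (θ₃ - θ₁) + f θ₃ * (θ₁ - θ₂)

lemma alternant_rotate {R : Type*} [CommRing R] (f : R → R) (θ₁ θ₂ θ₃ : R) :
    alternant f θ₂ θ₃ θ₁ = alternant f θ₁ θ₂ θ₃ := by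
  simp only [alternant]
  ring

namespace IsCubicRoots

section CommRing

variable {R : Type*} [CommRing R] {A B θ₁ θ₂ θ₃ : R}

lemma rotate (h : IsCubicRoots A B θ₁ θ₂ θ₃) : IsCubicRoots A B θ₂ θ₃ θ₁ where
  add_add := by linear_combination h.add_add
  mul_add_mul_add_mul := by linear_combination h.mul_add_mul_add_mul
  mul_mul := by linear_combination h.mul_mul

lemma cube_add_mul_sub_eq (h : IsCubicRoots A B θ₁ θ₂ θ₃) (x : R) :
    x ^ 3 + A * x - B = (x - θ₁) * (x - θ₂) * (x - θ₃) := by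
  rw [← h.mul_add_mul_add_mul, ← h.mul_mul]
  linear_combination x ^ 2 * h.add_add

lemma cube_add_mul_eq (h : IsCubicRoots A B θ₁ θ₂ θ₃) : θ₁ ^ 3 + A * θ₁ = B := by
  linear_combination h.cube_add_mul_sub_eq θ₁

lemma sq_vandermonde (h : IsCubicRoots A B θ₁ θ₂ θ₃) :
    ((θ₁ - θ₂) * (θ₁ - θ₃) * (θ₂ - θ₃)) ^ 2 = -4 * A ^ 3 - 27 * B ^ 2 := by
  have h₃ : θ₃ = -θ₁ - θ₂ := by linear_combination h.add_add
  rw [← h.mul_add_mul_add_mul, ← h.mul_mul, h₃]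
  ring

lemma alternant_pow_add_three (h : IsCubicRoots A B θ₁ θ₂ θ₃) (n : ℕ) :
    alternant (· ^ (n + 3)) θ₁ θ₂ θ₃ =
      B * alternant (· ^ n) θ₁ θ₂ θ₃ - A * alternant (· ^ (n + 1)) θ₁ θ₂ θ₃ := by
  simp only [alternant]
  linear_combination θ₁ ^ n * (θ₂ - θ₃) * h.cube_add_mul_eq
    + θ₂ ^ n * (θ₃ - θ₁) * h.rotate.cube_add_mul_eq
    + θ₃ ^ n * (θ₁ - θ₂) * h.rotate.rotate.cube_add_mul_eq

/-- For `n ≥ 1`, `useq a₀ b₀ n` is the complete homogeneous symmetric polynomial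
`h_n(θ₁, θ₂, θ₃)`. -/
lemma useq_mul_vandermonde {a₀ b₀ : ℤ} (h : IsCubicRoots (a₀ : R) b₀ θ₁ θ₂ θ₃) (n : ℕ) :
    useq a₀ b₀ (n + 1) * ((θ₁ - θ₂) * (θ₁ - θ₃) * (θ₂ - θ₃)) =
      alternant (· ^ (n + 3)) θ₁ θ₂ θ₃ := by
  induction n using Nat.strong_induction_on with
  | _ n ih =>
    have h₃ : θ₃ = -θ₁ - θ₂ := by linear_combination h.add_add
    match n with
    | 0 =>
      simp only [useq, alternant, Int.cast_zero, h₃]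
      ring
    | 1 =>
      simp only [useq, alternant, Int.cast_neg, ← h.mul_add_mul_add_mul, h₃]
      ring
    | 2 =>
      simp only [useq, alternant, ← h.mul_mul, h₃]
      ring
    | m + 3 =>
      rw [h.alternant_pow_add_three, ← ih m (by omega), ← ih (m + 1) (by omega)]
      simp only [useq, Int.cast_sub, Int.cast_mul]
      ring

end CommRing

section Field

variable {K : Type*} [Field K] {A B θ₁ θ₂ θ₃ : K}

lemma eq_or_eq_or_eq (h : IsCubicRoots A B θ₁ θ₂ θ₃) {x : K} (hx : x ^ 3 + A * x = B) :
    x = θ₁ ∨ x = θ₂ ∨ x = θ₃ := by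
  have hx' : (x - θ₁) * (x - θ₂) * (x - θ₃) = 0 := by
    rw [← h.cube_add_mul_sub_eq, hx, sub_self]
  simpa only [mul_eq_zero, sub_eq_zero, or_assoc] using hx'

lemma map_eq_or_eq_or_eq (h : IsCubicRoots A B θ₁ θ₂ θ₃) (φ : K →+* K) (hA : φ A = A)
    (hB : φ B = B) : φ θ₁ = θ₁ ∨ φ θ₁ = θ₂ ∨ φ θ₁ = θ₃ :=
  h.eq_or_eq_or_eq (by rw [← hA, ← hB, ← map_pow, ← map_mul, ← map_add, h.cube_add_mul_eq])

lemma sq_three_mul_mul_sub_ne (h : IsCubicRoots A B θ₁ θ₂ θ₃) (h3 : (3 : K) ≠ 0) (hB : B ≠ 0)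
    (h₁₂ : θ₁ ≠ θ₂) (h₁₃ : θ₁ ≠ θ₃) : (3 * θ₁ * (θ₂ - θ₃)) ^ 2 ≠ 9 * A ^ 2 := by
  intro hsq
  have h₃ : θ₃ = -θ₁ - θ₂ := by linear_combination h.add_add
  have hθ₂θ₃ : θ₂ * θ₃ ≠ 0 := by
    rintro h0
    exact hB (by rw [← h.mul_mul, mul_assoc, h0, mul_zero])
  have hsq' : θ₂ * θ₃ * (θ₂ * θ₃ + 2 * θ₁ ^ 2) = 0 := by
    refine mul_left_cancel₀ (mul_ne_zero h3 h3) ?_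
    rw [← h.mul_add_mul_add_mul] at hsq
    rw [h₃] at hsq ⊢
    linear_combination -hsq
  have hprod : (θ₂ - θ₁) * (θ₃ - θ₁) = 0 := by
    linear_combination (mul_eq_zero.mp hsq').resolve_left hθ₂θ₃ - θ₁ * h.add_add
  rcases mul_eq_zero.mp hprod with h0 | h0
  · exact h₁₂ (sub_eq_zero.mp h0).symm
  · exact h₁₃ (sub_eq_zero.mp h0).symm

lemma sq_alternant_ne_of_map_eq_self (h : IsCubicRoots A B θ₁ θ₂ θ₃) (φ : K →+* K)
    (hA : φ A = A) (hB : φ B = B) (h3 : (3 : K) ≠ 0) (hA0 : A ≠ 0) (hB0 : B ≠ 0)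
    (h₁₂ : θ₁ ≠ θ₂) (h₁₃ : θ₁ ≠ θ₃) (h₂₃ : θ₂ ≠ θ₃) (hfix : φ θ₁ = θ₁) :
    alternant φ θ₁ θ₂ θ₃ ^ 2 ≠ 9 * A ^ 2 := by
  have hinj := φ.injective
  rcases h.rotate.map_eq_or_eq_or_eq φ hA hB with h₂ | h₂ | h₂ <;>
    rcases h.rotate.rotate.map_eq_or_eq_or_eq φ hA hB with h₃ | h₃ | h₃
  all_goals try (exfalso; grind)
  · have hW : alternant φ θ₁ θ₂ θ₃ = 0 := by rw [alternant, hfix, h₂, h₃]; ring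
    rw [hW, ne_comm, zero_pow two_ne_zero]
    exact mul_ne_zero (by rw [show (9 : K) = 3 ^ 2 by norm_num]; exact pow_ne_zero 2 h3)
      (pow_ne_zero 2 hA0)
  · have hW : alternant φ θ₁ θ₂ θ₃ = 3 * θ₁ * (θ₂ - θ₃) := by
      rw [alternant, hfix, h₂, h₃]; linear_combination (θ₃ - θ₂) * h.add_add
    exact hW ▸ h.sq_three_mul_mul_sub_ne h3 hB0 h₁₂ h₁₃

lemma sq_alternant_eq_of_map_ne_self (h : IsCubicRoots A B θ₁ θ₂ θ₃) (φ : K →+* K)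
    (hA : φ A = A) (hB : φ B = B) (h₁₂ : θ₁ ≠ θ₂) (h₁₃ : θ₁ ≠ θ₃) (h₂₃ : θ₂ ≠ θ₃)
    (h₁ : φ θ₁ ≠ θ₁) (h₂ : φ θ₂ ≠ θ₂) (h₃ : φ θ₃ ≠ θ₃) :
    alternant φ θ₁ θ₂ θ₃ ^ 2 = 9 * A ^ 2 := by
  have hinj := φ.injective
  rw [← h.mul_add_mul_add_mul]
  rcases h.map_eq_or_eq_or_eq φ hA hB with e₁ | e₁ | e₁ <;>
    rcases h.rotate.map_eq_or_eq_or_eq φ hA hB with e₂ | e₂ | e₂ <;>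
    rcases h.rotate.rotate.map_eq_or_eq_or_eq φ hA hB with e₃ | e₃ | e₃
  all_goals first
    | (exfalso; grind)
    | (rw [alternant, e₁, e₂, e₃]
       linear_combination (θ₁ + θ₂ + θ₃) * ((θ₁ + θ₂ + θ₃) ^ 2
          - 6 * (θ₁ * θ₂ + θ₁ * θ₃ + θ₂ * θ₃)) * h.add_add)

theorem map_eq_self_or_iff_sq_alternant_ne (h : IsCubicRoots A B θ₁ θ₂ θ₃) (φ : K →+* K)
    (hA : φ A = A) (hB : φ B = B) (h3 : (3 : K) ≠ 0) (hA0 : A ≠ 0) (hB0 : B ≠ 0)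
    (h₁₂ : θ₁ ≠ θ₂) (h₁₃ : θ₁ ≠ θ₃) (h₂₃ : θ₂ ≠ θ₃) :
    (φ θ₁ = θ₁ ∨ φ θ₂ = θ₂ ∨ φ θ₃ = θ₃) ↔ alternant φ θ₁ θ₂ θ₃ ^ 2 ≠ 9 * A ^ 2 := by
  refine ⟨?_, fun hW => ?_⟩
  · rintro (hfix | hfix | hfix)
    · exact h.sq_alternant_ne_of_map_eq_self φ hA hB h3 hA0 hB0 h₁₂ h₁₃ h₂₃ hfix
    · rw [← alternant_rotate]
      exact h.rotate.sq_alternant_ne_of_map_eq_self φ hA hB h3 hA0 hB0 h₂₃ h₁₂.symm h₁₃.symm hfix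
    · rw [← alternant_rotate, ← alternant_rotate]
      exact h.rotate.rotate.sq_alternant_ne_of_map_eq_self φ hA hB h3 hA0 hB0
        h₁₃.symm h₂₃.symm h₁₂ hfix
  · by_contra! hfix
    exact hW (h.sq_alternant_eq_of_map_ne_self φ hA hB h₁₂ h₁₃ h₂₃ hfix.1 hfix.2.1 hfix.2.2)

end Field

end IsCubicRoots

section Field

variable {K : Type*} [Field K]

lemma cube_add_mul_eq_of_discr_eq_zero {A B : K} (hA : A ≠ 0)
    (hD : -4 * A ^ 3 - 27 * B ^ 2 = 0) :
    (-3 * B / A) ^ 3 + A * (-3 * B / A) = B := by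
  field_simp
  linear_combination B * hD

lemma exists_cube_add_mul_eq_and_ne_zero {A B : K} (h3 : (3 : K) ≠ 0) (hA : A ≠ 0) {x : K}
    (hx : x ^ 3 + A * x = B) : ∃ y : K, y ^ 3 + A * y = B ∧ 3 * y ^ 2 + A ≠ 0 := by
  by_cases hD : -4 * A ^ 3 - 27 * B ^ 2 = 0
  · refine ⟨-3 * B / A, cube_add_mul_eq_of_discr_eq_zero hA hD, fun h0 => ?_⟩
    -- here `3 y² + A = -3 A`
    field_simp at h0
    exact mul_ne_zero h3 (pow_ne_zero 3 hA) (by linear_combination -h0 - hD)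
  · refine ⟨x, hx, fun h0 => hD ?_⟩
    have hA' : A = -3 * x ^ 2 := by linear_combination h0
    have hB' : B = -2 * x ^ 3 := by linear_combination -hx + x * hA'
    rw [hA', hB']
    ring

open Polynomial in
lemma exists_isCubicRoots [IsAlgClosed K] (A B : K) :
    ∃ θ₁ θ₂ θ₃ : K, IsCubicRoots A B θ₁ θ₂ θ₃ := by
  obtain ⟨θ₁, h₁⟩ := IsAlgClosed.exists_root (X ^ 3 + C A * X - C B)
    (ne_of_eq_of_ne (by compute_degree! : _ = (3 : WithBot ℕ)) (by decide))
  obtain ⟨θ₂, h₂⟩ := IsAlgClosed.exists_root (X ^ 2 + C θ₁ * X + C (θ₁ ^ 2 + A))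
    (ne_of_eq_of_ne (by compute_degree! : _ = (2 : WithBot ℕ)) (by decide))
  simp only [IsRoot, eval_add, eval_sub, eval_mul, eval_pow, eval_C, eval_X] at h₁ h₂
  exact ⟨θ₁, θ₂, -θ₁ - θ₂, ⟨by ring, by linear_combination -h₂,
    by linear_combination h₁ - θ₁ * h₂⟩⟩

lemma exists_cube_add_mul_eq_iff_of_scale {a b A B c : K} (hc : c ≠ 0)
    (ha : a = A * c ^ 2) (hb : b = B * c ^ 3) :
    (∃ x : K, x ^ 3 + a * x = b) ↔ ∃ y : K, y ^ 3 + A * y = B := by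
  subst ha hb
  constructor
  · rintro ⟨x, hx⟩
    refine ⟨x / c, ?_⟩
    field_simp
    linear_combination hx
  · rintro ⟨y, hy⟩
    exact ⟨c * y, by linear_combination c ^ 3 * hy⟩

open Polynomial in
lemma exists_cube_add_mul_eq_iff_of_isIntegrallyClosed {R : Type*} [CommRing R] [IsDomain R]
    [IsIntegrallyClosed R] [Algebra R K] [IsFractionRing R K] (A B : R) :
    (∃ y : K, y ^ 3 + algebraMap R K A * y = algebraMap R K B) ↔
      ∃ z : R, z ^ 3 + A * z = B := by
  constructor
  · rintro ⟨y, hy⟩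
    have hint : IsIntegral R y := ⟨X ^ 3 + C A * X - C B, by monicity!, by
      simp [eval₂_sub, hy]⟩
    obtain ⟨z, rfl⟩ := IsIntegrallyClosed.isIntegral_iff.mp hint
    exact ⟨z, IsFractionRing.injective R K (by simpa using hy)⟩
  · rintro ⟨z, hz⟩
    exact ⟨algebraMap R K z, by rw [← map_pow, ← map_mul, ← map_add, hz]⟩

end Field

section ZMod

variable {p : ℕ} [Fact p.Prime]

lemma ZMod.three_ne_zero_of_lt (hp : 3 < p) : (3 : ZMod p) ≠ 0 := by
  rw [← Nat.cast_ofNat, Ne, ZMod.natCast_eq_zero_iff]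
  exact fun hdvd => absurd (Nat.le_of_dvd three_pos hdvd) (by omega)

lemma ZMod.exists_cube_add_mul_eq_iff_frobenius {K : Type*} [Field K] [CharP K p] {A B : ZMod p}
    {θ₁ θ₂ θ₃ : K}
    (h : IsCubicRoots (ZMod.castHom dvd_rfl K A) (ZMod.castHom dvd_rfl K B) θ₁ θ₂ θ₃) :
    (∃ x : ZMod p, x ^ 3 + A * x = B) ↔
      frobenius K p θ₁ = θ₁ ∨ frobenius K p θ₂ = θ₂ ∨ frobenius K p θ₃ = θ₃ := by
  set ι := ZMod.castHom (dvd_refl p) K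
  have hroot (x : ZMod p) : ι x ^ 3 + ι A * ι x = ι B ↔ x ^ 3 + A * x = B := by
    rw [← map_pow, ← map_mul, ← map_add, ι.injective.eq_iff]
  have hfix (θ : K) : frobenius K p θ = θ ↔ ∃ x : ZMod p, ι x = θ := by
    rw [frobenius_def, ← Subfield.mem_bot_iff_pow_eq_self K p, ← fieldRange_castHom_eq_bot p]
    rfl
  constructor
  · rintro ⟨x, hx⟩
    rcases h.eq_or_eq_or_eq ((hroot x).mpr hx) with hθ | hθ | hθ <;> rw [← hθ] <;>
      simp only [hfix, exists_apply_eq_apply, true_or, or_true]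
  · rintro (hθ | hθ | hθ) <;> obtain ⟨x, rfl⟩ := (hfix _).mp hθ
    exacts [⟨x, (hroot x).mp h.cube_add_mul_eq⟩, ⟨x, (hroot x).mp h.rotate.cube_add_mul_eq⟩,
      ⟨x, (hroot x).mp h.rotate.rotate.cube_add_mul_eq⟩]

lemma ZMod.exists_cube_add_mul_eq_iff_of_discr_ne_zero (K : Type*) [Field K] [IsAlgClosed K]
    [CharP K p] (hp : 3 < p) {a₀ b₀ : ℤ} (ha₀ : (a₀ : ZMod p) ≠ 0) (hb₀ : (b₀ : ZMod p) ≠ 0)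
    (hD : -4 * (a₀ : ZMod p) ^ 3 - 27 * (b₀ : ZMod p) ^ 2 ≠ 0) :
    (∃ x : ZMod p, x ^ 3 + a₀ * x = b₀) ↔
      ¬ Int.ModEq p ((-4 * a₀ ^ 3 - 27 * b₀ ^ 2) * useq a₀ b₀ (p - 2) ^ 2) (9 * a₀ ^ 2) := by
  let ι := ZMod.castHom (dvd_refl p) K
  obtain ⟨θ₁, θ₂, θ₃, h⟩ := exists_isCubicRoots (a₀ : K) (b₀ : K)
  have hΔ : (θ₁ - θ₂) * (θ₁ - θ₃) * (θ₂ - θ₃) ≠ 0 := by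
    refine fun hΔ => hD (ι.injective ?_)
    rw [map_zero, ← zero_pow two_ne_zero, ← hΔ, h.sq_vandermonde]
    simp only [map_sub, map_mul, map_neg, map_pow, map_ofNat, map_intCast]
  obtain ⟨h₁₂, h₁₃, h₂₃⟩ : θ₁ ≠ θ₂ ∧ θ₁ ≠ θ₃ ∧ θ₂ ≠ θ₃ := by
    simp only [ne_eq, mul_eq_zero, sub_eq_zero, not_or] at hΔ
    exact ⟨hΔ.1.1, hΔ.1.2, hΔ.2⟩
  have hu := h.useq_mul_vandermonde (p - 3)
  rw [show p - 3 + 1 = p - 2 by omega, show p - 3 + 3 = p by omega] at hu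
  have hcrit : (((-4 * a₀ ^ 3 - 27 * b₀ ^ 2) * useq a₀ b₀ (p - 2) ^ 2 : ℤ) : K) =
      alternant (frobenius K p) θ₁ θ₂ θ₃ ^ 2 := by
    push_cast
    rw [← h.sq_vandermonde,
      show alternant (frobenius K p) θ₁ θ₂ θ₃ = alternant (· ^ p) θ₁ θ₂ θ₃ from rfl, ← hu]
    ring
  have hι {x : ZMod p} (hx : x ≠ 0) : ι x ≠ 0 := (map_ne_zero ι).mpr hx
  have h' : IsCubicRoots (ι a₀) (ι b₀) θ₁ θ₂ θ₃ := by simpa only [map_intCast] using h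
  rw [ZMod.exists_cube_add_mul_eq_iff_frobenius h', ← CharP.intCast_eq_intCast K p, hcrit]
  push_cast
  refine h.map_eq_self_or_iff_sq_alternant_ne (frobenius K p) (map_intCast _ a₀)
    (map_intCast _ b₀) ?_ ?_ ?_ h₁₂ h₁₃ h₂₃
  · simpa only [map_ofNat] using hι (ZMod.three_ne_zero_of_lt hp)
  · simpa only [map_intCast] using hι ha₀
  · simpa only [map_intCast] using hι hb₀

theorem ZMod.exists_cube_add_mul_eq_iff (hp : 3 < p) {a₀ b₀ : ℤ}
    (ha₀ : (a₀ : ZMod p) ≠ 0) (hb₀ : (b₀ : ZMod p) ≠ 0) :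
    (∃ x : ZMod p, x ^ 3 + a₀ * x = b₀) ↔
      ¬ Int.ModEq p ((-4 * a₀ ^ 3 - 27 * b₀ ^ 2) * useq a₀ b₀ (p - 2) ^ 2) (9 * a₀ ^ 2) := by
  by_cases hD : -4 * (a₀ : ZMod p) ^ 3 - 27 * (b₀ : ZMod p) ^ 2 = 0
  · refine iff_of_true ⟨_, cube_add_mul_eq_of_discr_eq_zero ha₀ hD⟩ ?_
    rw [← ZMod.intCast_eq_intCast_iff]
    push_cast
    rw [hD, zero_mul, show (9 : ZMod p) = 3 ^ 2 by norm_num]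
    exact (mul_ne_zero (pow_ne_zero 2 (ZMod.three_ne_zero_of_lt hp)) (pow_ne_zero 2 ha₀)).symm
  · exact ZMod.exists_cube_add_mul_eq_iff_of_discr_ne_zero (AlgebraicClosure (ZMod p)) hp
      ha₀ hb₀ hD

end ZMod

namespace PadicInt

variable {p : ℕ} [Fact p.Prime]

instance : HenselianLocalRing ℤ_[p] where
  is_henselian f hf a₀ h₁ h₂ := HenselianRing.is_henselian f hf a₀ h₁ (h₂.map _)

lemma toZMod_eq_zero_iff_norm_lt_one (z : ℤ_[p]) : toZMod z = 0 ↔ ‖z‖ < 1 := by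
  rw [← RingHom.mem_ker, ker_toZMod, IsLocalRing.mem_maximalIdeal, mem_nonunits]

open Polynomial in
lemma exists_cube_add_mul_eq_iff_toZMod (h3 : (3 : ZMod p) ≠ 0) {A B : ℤ_[p]}
    (hA : toZMod A ≠ 0) :
    (∃ z : ℤ_[p], z ^ 3 + A * z = B) ↔ ∃ x : ZMod p, x ^ 3 + toZMod A * x = toZMod B := by
  refine ⟨fun ⟨z, hz⟩ => ⟨toZMod z, by rw [← map_pow, ← map_mul, ← map_add, hz]⟩, ?_⟩
  rintro ⟨x, hx⟩
  obtain ⟨y, hy, hy'⟩ := exists_cube_add_mul_eq_and_ne_zero h3 hA hx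
  have hensel := (HenselianLocalRing.TFAE ℤ_[p]).out 0 2
  obtain ⟨z, hz, -⟩ := hensel.mp inferInstance toZMod
    (ZMod.ringHom_surjective _) (X ^ 3 + C A * X - C B) (by monicity!) y
    (by simp [eval₂_sub, hy]) (by
      simp only [derivative_sub, derivative_add, derivative_X_pow, derivative_C_mul_X,
        derivative_C, sub_zero, eval₂_add, eval₂_mul, eval₂_C, eval₂_X, eval₂_pow, map_natCast]
      norm_num [hy'])
  exact ⟨z, by simpa [sub_eq_zero] using hz⟩

end PadicInt

namespace Padic

variable {p : ℕ} [Fact p.Prime]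

lemma exists_unit_of_isFirstDigit {x : ℚ_[p]} {x₀ : ℤ} (hx : x ≠ 0) (h : isFirstDigit p x x₀) :
    ∃ U : ℤ_[p]ˣ, x = U * (p : ℚ_[p]) ^ x.valuation ∧ PadicInt.toZMod (U : ℤ_[p]) = x₀ := by
  have hp : (p : ℚ_[p]) ≠ 0 := by exact_mod_cast (Fact.out : p.Prime).ne_zero
  have hnorm : ‖x * (p : ℚ_[p]) ^ (-x.valuation)‖ = 1 := by
    rw [norm_mul, norm_eq_zpow_neg_valuation hx, norm_p_zpow, neg_neg,
      ← zpow_add₀ (by exact_mod_cast (Fact.out : p.Prime).ne_zero), neg_add_cancel, zpow_zero]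
  refine ⟨PadicInt.mkUnits hnorm, ?_, ?_⟩
  · rw [PadicInt.mkUnits_eq, mul_assoc, ← zpow_add₀ hp, neg_add_cancel, zpow_zero, mul_one]
  · rw [← sub_eq_zero, ← map_intCast PadicInt.toZMod, ← map_sub,
      PadicInt.toZMod_eq_zero_iff_norm_lt_one]
    exact h.2.2

lemma exists_valuation_eq_of_norm_pow_three_eq {a b : ℚ_[p]} (ha : a ≠ 0) (hb : b ≠ 0)
    (hab : ‖a‖ ^ 3 = ‖b‖ ^ 2) : ∃ k : ℤ, a.valuation = 2 * k ∧ b.valuation = 3 * k := by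
  have hp : (1 : ℝ) < p := by exact_mod_cast (Fact.out : p.Prime).one_lt
  rw [norm_eq_zpow_neg_valuation ha, norm_eq_zpow_neg_valuation hb, ← zpow_natCast,
    ← zpow_natCast, ← zpow_mul, ← zpow_mul] at hab
  have hv := zpow_right_injective₀ (by positivity) hp.ne' hab
  exact ⟨b.valuation - a.valuation, by omega, by omega⟩

end Padic

theorem cubic_solvable_iff_of_eq (p : ℕ) [Fact p.Prime] (hp : 3 < p)
    (a b : ℚ_[p]) (ha : a ≠ 0) (hb : b ≠ 0)
    (hab : ‖a‖ ^ 3 = ‖b‖ ^ 2)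
    (a0 b0 : ℤ) (ha0 : isFirstDigit p a a0) (hb0 : isFirstDigit p b b0) :
    (∃ x : ℚ_[p], x ^ 3 + a * x = b) ↔
      ¬ Int.ModEq (p : ℤ)
        ((-4 * a0 ^ 3 - 27 * b0 ^ 2) * useq a0 b0 (p - 2) ^ 2) (9 * a0 ^ 2) := by
  obtain ⟨A, hA, hA₀⟩ := Padic.exists_unit_of_isFirstDigit ha ha0
  obtain ⟨B, hB, hB₀⟩ := Padic.exists_unit_of_isFirstDigit hb hb0
  obtain ⟨k, hka, hkb⟩ := Padic.exists_valuation_eq_of_norm_pow_three_eq ha hb hab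
  have hc : (p : ℚ_[p]) ^ k ≠ 0 := zpow_ne_zero _ (by exact_mod_cast (Fact.out : p.Prime).ne_zero)
  have hA0 : PadicInt.toZMod (A : ℤ_[p]) ≠ 0 := (A.isUnit.map _).ne_zero
  have hB0 : PadicInt.toZMod (B : ℤ_[p]) ≠ 0 := (B.isUnit.map _).ne_zero
  rw [exists_cube_add_mul_eq_iff_of_scale hc (by rw [hA, hka, mul_comm 2, zpow_mul, zpow_ofNat])
      (by rw [hB, hkb, mul_comm 3, zpow_mul, zpow_ofNat]),
    ← PadicInt.algebraMap_apply, ← PadicInt.algebraMap_apply,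
    exists_cube_add_mul_eq_iff_of_isIntegrallyClosed,
    PadicInt.exists_cube_add_mul_eq_iff_toZMod (ZMod.three_ne_zero_of_lt hp) hA0, hA₀, hB₀]
  exact ZMod.exists_cube_add_mul_eq_iff hp (hA₀ ▸ hA0) (hB₀ ▸ hB0)
end

section
/- Let p > 3 be a prime and let a, b ∈ ℚ_p be nonzero with |a|_p³ > |b|_p². Then the equation x³ + ax = b has a solution x ∈ ℚ_p. -/
/-!
The substitution `x = (b / a) z` turns `x³ + a x = b` into `c z³ + z = 1` with `c = b² / a³`,
and `‖c‖ < 1` is exactly the hypothesis `‖b‖² < ‖a‖³`. For `F = c X³ + X - 1` the point `z = 1`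
is an approximate root: `‖F(1)‖ = ‖c‖ < 1` while `F'(1) = 3c + 1` is a unit, so Hensel's lemma
produces an exact root in `ℤ_[p]`.
-/

open Polynomial

namespace PadicInt

variable {p : ℕ} [Fact p.Prime]

theorem norm_mul_natCast_add_one {c : ℤ_[p]} (hc : ‖c‖ < 1) (n : ℕ) : ‖c * n + 1‖ = 1 := by
  have hlt : ‖c * n‖ < 1 :=
    (norm_mul_le_of_le le_rfl (norm_le_one _)).trans_lt (by simpa using hc)
  rw [norm_add_eq_max_of_ne (by simpa using hlt.ne), norm_one, max_eq_right hlt.le]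

theorem exists_mul_pow_add_eq_one_s10 {c : ℤ_[p]} (hc : ‖c‖ < 1) (n : ℕ) :
    ∃ z : ℤ_[p], c * z ^ n + z = 1 := by
  set F : ℤ_[p][X] := C c * X ^ n + X - 1
  have hF : F.aeval (1 : ℤ_[p]) = c := by simp [F]
  have hF' : ‖F.derivative.aeval (1 : ℤ_[p])‖ = 1 := by
    simpa [F, derivative_X_pow] using norm_mul_natCast_add_one hc n
  obtain ⟨z, hz, -⟩ := hensels_lemma (F := F) (a := 1) (by rwa [hF, hF', one_pow])
  exact ⟨z, by simpa [F, sub_eq_zero] using hz⟩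

end PadicInt

namespace Padic

variable {p : ℕ} [Fact p.Prime]

theorem exists_mul_pow_add_eq_one_s10 {c : ℚ_[p]} (hc : ‖c‖ < 1) (n : ℕ) :
    ∃ z : ℚ_[p], c * z ^ n + z = 1 := by
  obtain ⟨z, hz⟩ := PadicInt.exists_mul_pow_add_eq_one_s10 (c := ⟨c, hc.le⟩) hc n
  exact ⟨z, by exact_mod_cast congrArg ((↑) : ℤ_[p] → ℚ_[p]) hz⟩

end Padic

theorem cubic_solvable_of_gt_general (p : ℕ) [Fact p.Prime]
    (a b : ℚ_[p])
    (hab : ‖b‖ ^ 2 < ‖a‖ ^ 3) :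
    ∃ x : ℚ_[p], x ^ 3 + a * x = b := by
  have ha : a ≠ 0 := by
    rintro rfl
    rw [norm_zero, zero_pow three_ne_zero] at hab
    exact absurd hab (not_lt.mpr (by positivity))
  have hc : ‖b ^ 2 / a ^ 3‖ < 1 := by
    rwa [norm_div, norm_pow, norm_pow, div_lt_one (by positivity)]
  obtain ⟨z, hz⟩ := Padic.exists_mul_pow_add_eq_one_s10 hc 3
  refine ⟨b / a * z, ?_⟩
  calc (b / a * z) ^ 3 + a * (b / a * z) = b * (b ^ 2 / a ^ 3 * z ^ 3 + z) := by
        field_simp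
    _ = b := by rw [hz, mul_one]

theorem cubic_solvable_of_gt (p : ℕ) [Fact p.Prime] (hp : 3 < p)
    (a b : ℚ_[p]) (ha : a ≠ 0) (hb : b ≠ 0)
    (hab : ‖b‖ ^ 2 < ‖a‖ ^ 3) :
    ∃ x : ℚ_[p], x ^ 3 + a * x = b :=
  cubic_solvable_of_gt_general p a b hab
end

section
/- Let p > 3 be a prime and let a, b ∈ ℚ_p be nonzero with |a|_p = |b|_p = 1. Set D = −4a³ − 27b² and suppose 0 < |D|_p < 1, the p-adic valuation v_p(D) is even, and d_0^{(p−1)/2} ≡ 1 (mod p), where d_0 is the first digit of D. Then the equation x³ + ax = b has exactly 3 solutions x in ℤ_p^*, i.e. the set {x ∈ ℚ_p : |x|_p = 1 and x³ + ax = b} has exactly 3 elements. -/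
open Polynomial

theorem norm_eq_one_of_cubic_eq {K : Type*} [NormedField K] [IsUltrametricDist K] {a b x : K}
    (ha : ‖a‖ ≤ 1) (hb : ‖b‖ = 1) (hx : x ^ 3 + a * x = b) : ‖x‖ = 1 := by
  have hax : ‖a * x‖ ≤ ‖x‖ := by
    rw [norm_mul]; exact mul_le_of_le_one_left (norm_nonneg x) ha
  rcases lt_trichotomy ‖x‖ 1 with hlt | heq | hgt
  · have : ‖b‖ < 1 := by
      calc ‖b‖ = ‖x ^ 3 + a * x‖ := by rw [hx]
        _ ≤ max ‖x ^ 3‖ ‖a * x‖ := IsUltrametricDist.norm_add_le_max _ _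
        _ < 1 := max_lt (by rw [norm_pow]; exact pow_lt_one₀ (norm_nonneg x) hlt three_ne_zero)
            (hax.trans_lt hlt)
    exact absurd hb this.ne
  · exact heq
  · have hcube : ‖a * x‖ < ‖x ^ 3‖ := by
      rw [norm_pow]; exact hax.trans_lt (lt_self_pow₀ hgt (by norm_num))
    have : 1 < ‖b‖ := by
      rw [← hx, IsUltrametricDist.norm_add_eq_max_of_norm_ne_norm hcube.ne', max_eq_left hcube.le,
        norm_pow]
      exact one_lt_pow₀ hgt three_ne_zero
    exact absurd hb this.ne'

theorem ncard_setOf_cubic_eq_three {K : Type*} [Field K] (h2 : (2 : K) ≠ 0) {a b z σ : K}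
    (hz : z ^ 3 + a * z = b) (hσ : σ ^ 2 = -4 * a ^ 3 - 27 * b ^ 2)
    (hD : -4 * a ^ 3 - 27 * b ^ 2 ≠ 0) :
    {x : K | x ^ 3 + a * x = b}.ncard = 3 := by
  have hdisc : (-3 * z ^ 2 - 4 * a) * (3 * z ^ 2 + a) ^ 2 = σ ^ 2 := by
    rw [hσ]; linear_combination (-27 * (b + z ^ 3 + a * z)) * hz
  have hσ0 : σ ≠ 0 := by rintro rfl; exact hD (by rw [← hσ]; ring)
  have hderiv : 3 * z ^ 2 + a ≠ 0 := by
    intro h; apply hσ0; rw [← sq_eq_zero_iff, ← hdisc, h]; ring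
  obtain ⟨e, heσ⟩ : ∃ e, e * (3 * z ^ 2 + a) = σ := ⟨σ / (3 * z ^ 2 + a), div_mul_cancel₀ σ hderiv⟩
  have he : e ^ 2 = -3 * z ^ 2 - 4 * a := by
    apply mul_right_cancel₀ (pow_ne_zero 2 hderiv)
    rw [hdisc, ← heσ]; ring
  have hfactor (x : K) :
      x ^ 3 + a * x - b = (x - z) * (x - (-z + e) / 2) * (x - (-z - e) / 2) := by
    field_simp
    linear_combination 4 * hz + (x - z) * he
  have hprod : (z - (-z + e) / 2) * (z - (-z - e) / 2) * ((-z + e) / 2 - (-z - e) / 2) = σ := by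
    field_simp
    linear_combination (-2 * e) * he + 8 * heσ
  set r₁ := (-z + e) / 2
  set r₂ := (-z - e) / 2
  obtain ⟨hz₁₂, h₁₂⟩ := mul_ne_zero_iff.mp (hprod ▸ hσ0 : (z - r₁) * (z - r₂) * (r₁ - r₂) ≠ 0)
  obtain ⟨h₁, h₂⟩ := mul_ne_zero_iff.mp hz₁₂
  refine Set.ncard_eq_three.mpr
    ⟨z, r₁, r₂, sub_ne_zero.mp h₁, sub_ne_zero.mp h₂, sub_ne_zero.mp h₁₂, ?_⟩
  ext x
  rw [Set.mem_ofPred_eq, ← sub_eq_zero, hfactor, mul_eq_zero, mul_eq_zero, sub_eq_zero, sub_eq_zero,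
    sub_eq_zero, or_assoc]
  rfl

theorem Int.exists_sq_modEq_of_pow_modEq_one {p : ℕ} [hp : Fact p.Prime] (hp2 : p ≠ 2) {d : ℤ}
    (h : d ^ ((p - 1) / 2) ≡ 1 [ZMOD p]) : ∃ t : ℤ, t ^ 2 ≡ d [ZMOD p] := by
  have hhalf : (p - 1) / 2 = p / 2 := by
    obtain ⟨k, hk⟩ := hp.out.odd_of_ne_two hp2; omega
  have hpow : (d : ZMod p) ^ (p / 2) = 1 := by
    simpa [hhalf] using (ZMod.intCast_eq_intCast_iff _ _ _).mpr h
  have hd : (d : ZMod p) ≠ 0 := by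
    rintro hd
    rw [hd, zero_pow (by have := hp.out.two_le; omega)] at hpow
    exact zero_ne_one hpow
  obtain ⟨y, hy⟩ := (ZMod.euler_criterion p hd).mpr hpow
  refine ⟨y.val, (ZMod.intCast_eq_intCast_iff _ _ _).mp ?_⟩
  simp [hy, sq]

namespace Padic

variable {p : ℕ} [Fact p.Prime]

theorem exists_aeval_eq_zero_of_norm_lt_sq (F : ℤ_[p][X]) {c : ℚ_[p]} (hc : ‖c‖ ≤ 1)
    (h : ‖aeval c F‖ < ‖aeval c (derivative F)‖ ^ 2) : ∃ z : ℚ_[p], aeval z F = 0 := by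
  obtain ⟨c, rfl⟩ : ∃ c' : ℤ_[p], (c' : ℚ_[p]) = c := ⟨⟨c, hc⟩, rfl⟩
  have hcoe (x : ℤ_[p]) (G : ℤ_[p][X]) : aeval (x : ℚ_[p]) G = (aeval x G : ℚ_[p]) :=
    aeval_algebraMap_apply ℚ_[p] x G
  simp only [hcoe, ← PadicInt.norm_def] at h
  obtain ⟨z, hz, -⟩ := hensels_lemma h
  exact ⟨z, by rw [hcoe, hz, PadicInt.coe_zero]⟩

theorem exists_sq_eq_of_norm_sub_sq_lt_one (hp : p ≠ 2) {u t : ℚ_[p]} (ht : ‖t‖ = 1)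
    (h : ‖u - t ^ 2‖ < 1) : ∃ s : ℚ_[p], s ^ 2 = u := by
  have hu : ‖u‖ ≤ 1 := by
    calc ‖u‖ = ‖(u - t ^ 2) + t ^ 2‖ := by rw [sub_add_cancel]
      _ ≤ max ‖u - t ^ 2‖ ‖t ^ 2‖ := IsUltrametricDist.norm_add_le_max _ _
      _ ≤ 1 := by rw [norm_pow, ht, one_pow]; exact max_le h.le le_rfl
  obtain ⟨u, rfl⟩ : ∃ u' : ℤ_[p], (u' : ℚ_[p]) = u := ⟨⟨u, hu⟩, rfl⟩
  have h2 : ‖(2 : ℚ_[p])‖ = 1 := by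
    exact_mod_cast norm_natCast_eq_one_iff.mpr ((Nat.coprime_primes Fact.out Nat.prime_two).mpr hp)
  obtain ⟨s, hs⟩ := exists_aeval_eq_zero_of_norm_lt_sq (X ^ 2 - C u) ht.le (by
    rw [show aeval t (derivative (X ^ 2 - C u)) = 2 * t by simp; norm_num]
    simpa [norm_sub_rev, h2, ht] using h)
  exact ⟨s, by simpa [sub_eq_zero] using hs⟩

theorem exists_sq_eq_of_isFirstDigit (hp : p ≠ 2) {x : ℚ_[p]}
    (hval : 2 ∣ x.valuation) {d₀ : ℤ} (hd : isFirstDigit p x d₀)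
    (hres : d₀ ^ ((p - 1) / 2) ≡ 1 [ZMOD p]) : ∃ s : ℚ_[p], s ^ 2 = x := by
  obtain ⟨hd₁, hd₂, hunit⟩ := hd
  obtain ⟨t, hsq⟩ := Int.exists_sq_modEq_of_pow_modEq_one hp hres
  have htd : ‖(d₀ : ℚ_[p]) - (t : ℚ_[p]) ^ 2‖ < 1 := by
    exact_mod_cast norm_intCast_lt_one_iff.mpr hsq.dvd
  have ht : ‖(t : ℚ_[p])‖ = 1 := by
    refine le_antisymm (norm_int_le_one t) (not_lt.mp fun hlt ↦ ?_)
    have hpd : (p : ℤ) ∣ d₀ := by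
      simpa using dvd_add hsq.dvd (dvd_pow (norm_intCast_lt_one_iff.mp hlt) two_ne_zero)
    linarith [Int.le_of_dvd (by omega) hpd]
  have hut : ‖x * (p : ℚ_[p]) ^ (-x.valuation) - (t : ℚ_[p]) ^ 2‖ < 1 := by
    rw [← sub_add_sub_cancel _ (d₀ : ℚ_[p])]
    exact (IsUltrametricDist.norm_add_le_max _ _).trans_lt (max_lt hunit htd)
  obtain ⟨s, hs⟩ := exists_sq_eq_of_norm_sub_sq_lt_one hp ht hut
  obtain ⟨m, hm⟩ := hval
  have hp0 : (p : ℚ_[p]) ≠ 0 := Nat.cast_ne_zero.mpr (NeZero.ne p)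
  refine ⟨s * (p : ℚ_[p]) ^ m, ?_⟩
  rw [mul_pow, hs, mul_assoc, ← zpow_natCast, ← zpow_mul, ← zpow_add₀ hp0, hm]
  simp [mul_comm]

theorem exists_cubic_root_of_norm_disc_lt_one (hp : p ≠ 3) {a b : ℚ_[p]} (ha : ‖a‖ = 1)
    (hb : ‖b‖ ≤ 1) (hD : ‖-4 * a ^ 3 - 27 * b ^ 2‖ < 1) : ∃ z : ℚ_[p], z ^ 3 + a * z = b := by
  have h3 : ‖(3 : ℚ_[p])‖ = 1 := by
    exact_mod_cast norm_natCast_eq_one_iff.mpr ((Nat.coprime_primes Fact.out Nat.prime_three).mpr hp)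
  have ha0 : a ≠ 0 := norm_ne_zero_iff.mp (by rw [ha]; exact one_ne_zero)
  obtain ⟨A, rfl⟩ : ∃ A : ℤ_[p], (A : ℚ_[p]) = a := ⟨⟨a, ha.le⟩, rfl⟩
  obtain ⟨B, rfl⟩ : ∃ B : ℤ_[p], (B : ℚ_[p]) = b := ⟨⟨b, hb⟩, rfl⟩
  set D := -4 * (A : ℚ_[p]) ^ 3 - 27 * (B : ℚ_[p]) ^ 2
  -- `-3b/a` is the simple root of the cubic when `D = 0`, hence a good starting point for Hensel
  set c := -3 * (B : ℚ_[p]) / A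
  have hc : ‖c‖ ≤ 1 := by
    rw [norm_div, norm_mul, norm_neg, h3, ha, one_mul, div_one]; exact hb
  have hval : c ^ 3 + A * c - B = B * D / A ^ 3 := by
    simp only [c, D]; field_simp; ring
  have hderiv : 3 * c ^ 2 + A = -3 * A - D / A ^ 2 := by
    simp only [c, D]; field_simp; ring
  have hderiv_norm : ‖3 * c ^ 2 + (A : ℚ_[p])‖ = 1 := by
    have hsmall : ‖D / (A : ℚ_[p]) ^ 2‖ < ‖-3 * (A : ℚ_[p])‖ := by
      rwa [norm_div, norm_pow, norm_mul, norm_neg, h3, ha, one_pow, div_one, one_mul]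
    rw [hderiv, sub_eq_add_neg, IsUltrametricDist.norm_add_eq_max_of_norm_ne_norm
      (by rw [norm_neg]; exact hsmall.ne'), norm_neg, max_eq_left hsmall.le, norm_mul, norm_neg, h3,
      ha, one_mul]
  obtain ⟨z, hz⟩ := exists_aeval_eq_zero_of_norm_lt_sq (X ^ 3 + C A * X - C B) hc (by
    have hF : aeval c (X ^ 3 + C A * X - C B) = c ^ 3 + A * c - B := by simp
    have hF' : aeval c (derivative (X ^ 3 + C A * X - C B)) = 3 * c ^ 2 + A := by
      simp; left; norm_cast
    rw [hF, hF', hval, hderiv_norm, one_pow, norm_div, norm_mul, norm_pow, ha, one_pow, div_one]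
    exact (mul_le_of_le_one_left (norm_nonneg _) hb).trans_lt hD)
  exact ⟨z, by simpa [sub_eq_zero] using hz⟩

end Padic

theorem cubic_three_unit_solutions_of_small_discriminant_general (p : ℕ) [Fact p.Prime]
    (hp : 3 < p) (a b : ℚ_[p])
    (ha1 : ‖a‖ = 1) (hb1 : ‖b‖ = 1)
    (hD0 : 0 < ‖-4 * a ^ 3 - 27 * b ^ 2‖) (hD1 : ‖-4 * a ^ 3 - 27 * b ^ 2‖ < 1)
    (hDval : (2 : ℤ) ∣ (-4 * a ^ 3 - 27 * b ^ 2 : ℚ_[p]).valuation)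
    (d0 : ℤ) (hd0 : isFirstDigit p (-4 * a ^ 3 - 27 * b ^ 2) d0)
    (hres : Int.ModEq (p : ℤ) (d0 ^ ((p - 1) / 2)) 1) :
    {x : ℚ_[p] | ‖x‖ = 1 ∧ x ^ 3 + a * x = b}.ncard = 3 := by
  obtain ⟨z, hz⟩ := Padic.exists_cubic_root_of_norm_disc_lt_one (by omega) ha1 hb1.le hD1
  obtain ⟨σ, hσ⟩ := Padic.exists_sq_eq_of_isFirstDigit (by omega) hDval hd0 hres
  have hunits : {x : ℚ_[p] | ‖x‖ = 1 ∧ x ^ 3 + a * x = b} = {x | x ^ 3 + a * x = b} :=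
    Set.ext fun _ ↦ and_iff_right_of_imp (norm_eq_one_of_cubic_eq ha1.le hb1)
  rw [hunits]
  exact ncard_setOf_cubic_eq_three two_ne_zero hz hσ (norm_pos_iff.mp hD0)

theorem cubic_three_unit_solutions_of_small_discriminant (p : ℕ) [Fact p.Prime]
    (hp : 3 < p) (a b : ℚ_[p]) (ha : a ≠ 0) (hb : b ≠ 0)
    (ha1 : ‖a‖ = 1) (hb1 : ‖b‖ = 1)
    (hD0 : 0 < ‖-4 * a ^ 3 - 27 * b ^ 2‖) (hD1 : ‖-4 * a ^ 3 - 27 * b ^ 2‖ < 1)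
    (hDval : (2 : ℤ) ∣ (-4 * a ^ 3 - 27 * b ^ 2 : ℚ_[p]).valuation)
    (d0 : ℤ) (hd0 : isFirstDigit p (-4 * a ^ 3 - 27 * b ^ 2) d0)
    (hres : Int.ModEq (p : ℤ) (d0 ^ ((p - 1) / 2)) 1) :
    {x : ℚ_[p] | ‖x‖ = 1 ∧ x ^ 3 + a * x = b}.ncard = 3 :=
  cubic_three_unit_solutions_of_small_discriminant_general p hp a b ha1 hb1 hD0 hD1 hDval d0 hd0
    hres
end

section
/- Let p > 3 be a prime and let a, b ∈ ℚ_p be nonzero with |a|_p = |b|_p > 1. Then the equation x³ + ax = b has exactly one solution x in ℤ_p^*, i.e. the set {x ∈ ℚ_p : |x|_p = 1 and x³ + ax = b} has exactly 1 element. -/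
/-!
Dividing by `a`, the equation `x³ + a x = b` becomes the fixed-point equation
`x = b/a - a⁻¹ x³`, where `|b/a|_p = 1` and `|a⁻¹|_p < 1`. Since `|x³ - y³|_p ≤ |x - y|_p` on `ℤ_p`,
the map `x ↦ b/a - a⁻¹ x³` is a contraction of `ℤ_p` with constant `|a⁻¹|_p`, so it has exactly one
fixed point there (Banach). That fixed point is a unit, because `b/a` is a unit and `a⁻¹ x³` is
strictly smaller; and every unit solution lies in `ℤ_p`, hence is this fixed point.
-/

theorem pow_add_mul_eq_iff_eq_div_sub_inv_mul_pow {K : Type*} [Field K] {a : K} (ha : a ≠ 0)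
    (b x : K) (n : ℕ) : x ^ n + a * x = b ↔ x = b / a - a⁻¹ * x ^ n := by
  field_simp
  constructor <;> intro h <;> linear_combination h

namespace PadicInt

variable {p : ℕ} [Fact p.Prime]

theorem norm_pow_sub_pow_le (x y : ℤ_[p]) (n : ℕ) : ‖x ^ n - y ^ n‖ ≤ ‖x - y‖ := by
  obtain ⟨q, hq⟩ := sub_dvd_pow_sub_pow x y n
  rw [hq, norm_mul]
  exact mul_le_of_le_one_right (norm_nonneg _) (norm_le_one q)

theorem contractingWith_sub_mul_pow {ε : ℤ_[p]} (hε : ‖ε‖ < 1) (u : ℤ_[p]) (n : ℕ) :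
    ContractingWith ‖ε‖₊ (fun x => u - ε * x ^ n) := by
  refine ⟨hε, LipschitzWith.of_dist_le_mul fun x y => ?_⟩
  rw [dist_eq_norm, dist_eq_norm, sub_sub_sub_cancel_left, ← mul_sub, norm_mul, coe_nnnorm,
    norm_sub_rev x]
  gcongr
  exact norm_pow_sub_pow_le y x n

theorem existsUnique_eq_sub_mul_pow {ε : ℤ_[p]} (hε : ‖ε‖ < 1) (u : ℤ_[p]) (n : ℕ) :
    ∃! z : ℤ_[p], z = u - ε * z ^ n :=
  have hT := contractingWith_sub_mul_pow hε u n
  ⟨hT.fixedPoint _, hT.fixedPoint_isFixedPt.symm, fun _ hz => hT.fixedPoint_unique hz.symm⟩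

theorem norm_sub_mul_eq_one {u ε : ℤ_[p]} (hu : ‖u‖ = 1) (hε : ‖ε‖ < 1) (w : ℤ_[p]) :
    ‖u - ε * w‖ = 1 := by
  have hsmall : ‖-(ε * w)‖ < ‖u‖ := by
    rw [norm_neg, norm_mul, hu]
    exact (mul_le_of_le_one_right (norm_nonneg _) (norm_le_one w)).trans_lt hε
  rw [sub_eq_add_neg, IsUltrametricDist.norm_add_eq_max_of_norm_ne_norm hsmall.ne',
    max_eq_left hsmall.le, hu]

end PadicInt

theorem cubic_one_unit_solution_of_eq_gt_one_general (p : ℕ) [Fact p.Prime]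
    (a b : ℚ_[p])
    (hab : ‖a‖ = ‖b‖) (ha1 : 1 < ‖a‖) :
    {x : ℚ_[p] | ‖x‖ = 1 ∧ x ^ 3 + a * x = b}.ncard = 1 := by
  have ha_pos : 0 < ‖a‖ := one_pos.trans ha1
  have ha : a ≠ 0 := norm_pos_iff.mp ha_pos
  have hu : ‖b / a‖ = 1 := by rw [norm_div, ← hab, div_self ha_pos.ne']
  have hε : ‖a⁻¹‖ < 1 := by rw [norm_inv]; exact inv_lt_one_of_one_lt₀ ha1
  let u : ℤ_[p] := ⟨b / a, hu.le⟩
  let ε : ℤ_[p] := ⟨a⁻¹, hε.le⟩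
  have hsolution (x : ℤ_[p]) : (x : ℚ_[p]) ^ 3 + a * x = b ↔ x = u - ε * x ^ 3 := by
    rw [pow_add_mul_eq_iff_eq_div_sub_inv_mul_pow ha]
    exact ⟨fun h => Subtype.ext h, congrArg Subtype.val⟩
  obtain ⟨z, hz, hz_unique⟩ := PadicInt.existsUnique_eq_sub_mul_pow (ε := ε) hε u 3
  refine Set.ncard_eq_one.mpr ⟨z, Set.ext fun x => ⟨fun ⟨hx, hxb⟩ => ?_, ?_⟩⟩
  · exact congrArg Subtype.val (hz_unique ⟨x, hx.le⟩ ((hsolution ⟨x, hx.le⟩).mp hxb))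
  · rintro rfl
    refine ⟨?_, (hsolution z).mpr hz⟩
    rw [← PadicInt.norm_def, hz]
    exact PadicInt.norm_sub_mul_eq_one (ε := ε) hu hε _

theorem cubic_one_unit_solution_of_eq_gt_one (p : ℕ) [Fact p.Prime] (hp : 3 < p)
    (a b : ℚ_[p]) (ha : a ≠ 0) (hb : b ≠ 0)
    (hab : ‖a‖ = ‖b‖) (ha1 : 1 < ‖a‖) :
    {x : ℚ_[p] | ‖x‖ = 1 ∧ x ^ 3 + a * x = b}.ncard = 1 :=
  cubic_one_unit_solution_of_eq_gt_one_general p a b hab ha1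
end
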